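/- arXiv:1503.05872 — 2 statements merged into one kernel-verified Lean document; each statement's English description precedes it below -/
import Mathlib

section
/- Universal lower bound for uniform Bernoulli traffic (Theorem 6.1, lower-bound part). Fix n ≥ 1 and 0 < ε < 1, and suppose each arrival entry a_{ij} is Bernoulli with P(a_{ij}=1) = (1−ε)/n (entries independent). Let the schedule be chosen by an arbitrary scheduling policy (any map from states to probability distributions over schedules, independent of the current arrivals). If π is an invariant distribution of the resulting Markov chain with E_π[(∑_{ij} q̄_{ij})²] < ∞, then E_π[∑_{ij} q̄_{ij}] ≥ (1−ε)²(n−1)/(2ε). -/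
open scoped BigOperators ENNReal

namespace SwitchModel

/-- Next queue state: `q⁺_{ij} = max(q_{ij} + a_{ij} − s_{ij}, 0)` (truncated `ℕ` subtraction). -/
def nextQ (n : ℕ) (q a s : Fin n → Fin n → ℕ) : Fin n → Fin n → ℕ :=
  fun i j => q i j + a i j - s i j

/-- A 0–1 matrix with at most one 1 per row and per column. -/
def IsSchedule (n : ℕ) (s : Fin n → Fin n → ℕ) : Prop :=
  (∀ i j, s i j ≤ 1) ∧ (∀ i, (∑ j, s i j) ≤ 1) ∧ (∀ j, (∑ i, s i j) ≤ 1)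

/-- A permutation matrix: exactly one 1 per row and per column. -/
def IsPerm (n : ℕ) (s : Fin n → Fin n → ℕ) : Prop :=
  (∀ i j, s i j ≤ 1) ∧ (∀ i, (∑ j, s i j) = 1) ∧ (∀ j, (∑ i, s i j) = 1)

/-- MaxWeight selection: `sched q` is a permutation matrix maximizing `∑ q_{ij} s_{ij}`. -/
def IsMaxWeight (n : ℕ) (sched : (Fin n → Fin n → ℕ) → (Fin n → Fin n → ℕ)) : Prop :=
  ∀ q, IsPerm n (sched q) ∧
    ∀ s, IsPerm n s → (∑ i, ∑ j, q i j * s i j) ≤ (∑ i, ∑ j, q i j * sched q i j)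

/-- Joint arrival probability: the entries are mutually independent with marginals `A i j`. -/
noncomputable def jointA (n : ℕ) (A : Fin n → Fin n → ℕ → ℝ≥0∞) (a : Fin n → Fin n → ℕ) : ℝ≥0∞ :=
  ∏ i, ∏ j, A i j (a i j)

/-- `A i j` is a probability distribution on `ℕ` supported on `[0, amax]`,
with mean `lam i j` and variance `(sig i j)^2`. -/
def ArrivalDist (n : ℕ) (A : Fin n → Fin n → ℕ → ℝ≥0∞)
    (lam sig : Fin n → Fin n → ℝ) (amax : ℕ) : Prop :=
  (∀ i j, (∑' k : ℕ, A i j k) = 1) ∧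
  (∀ i j k, A i j k ≠ 0 → k ≤ amax) ∧
  (∀ i j, (∑' k : ℕ, (A i j k).toReal * (k : ℝ)) = lam i j) ∧
  (∀ i j, (∑' k : ℕ, (A i j k).toReal * ((k : ℝ) - lam i j) ^ 2) = (sig i j) ^ 2)

/-- Transition kernel of the switch under a deterministic scheduling map `sched`. -/
noncomputable def kernelMW (n : ℕ) (A : Fin n → Fin n → ℕ → ℝ≥0∞)
    (sched : (Fin n → Fin n → ℕ) → (Fin n → Fin n → ℕ))
    (q q' : Fin n → Fin n → ℕ) : ℝ≥0∞ :=
  ∑' a : Fin n → Fin n → ℕ, jointA n A a * (if nextQ n q a (sched q) = q' then 1 else 0)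

/-- Transition kernel of the switch under a randomized scheduling policy `pol`
(the schedule is chosen independently of the current arrivals). -/
noncomputable def kernelPol (n : ℕ) (A : Fin n → Fin n → ℕ → ℝ≥0∞)
    (pol : (Fin n → Fin n → ℕ) → (Fin n → Fin n → ℕ) → ℝ≥0∞)
    (q q' : Fin n → Fin n → ℕ) : ℝ≥0∞ :=
  ∑' a : Fin n → Fin n → ℕ, ∑' s : Fin n → Fin n → ℕ,
    jointA n A a * pol q s * (if nextQ n q a s = q' then 1 else 0)

/-- `pd` is an invariant (stationary) probability distribution of the kernel `P`. -/
def IsInvariant (n : ℕ)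
    (P : (Fin n → Fin n → ℕ) → (Fin n → Fin n → ℕ) → ℝ≥0∞)
    (pd : (Fin n → Fin n → ℕ) → ℝ≥0∞) : Prop :=
  (∑' q : Fin n → Fin n → ℕ, pd q) = 1 ∧
  ∀ q', (∑' q : Fin n → Fin n → ℕ, pd q * P q q') = pd q'

/-- The face `F`: nonnegative matrices with all row and column sums equal to 1. -/
def memF (n : ℕ) (ν : Fin n → Fin n → ℝ) : Prop :=
  (∀ i j, 0 ≤ ν i j) ∧ (∀ i, (∑ j, ν i j) = 1) ∧ (∀ j, (∑ i, ν i j) = 1)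

/-- Steady-state expectation of the total queue length `∑_{ij} q_{ij}`. -/
noncomputable def Etot (n : ℕ) (pd : (Fin n → Fin n → ℕ) → ℝ≥0∞) : ℝ≥0∞ :=
  ∑' q : Fin n → Fin n → ℕ, pd q * (∑ i, ∑ j, (q i j : ℝ≥0∞))

/-- Steady-state expectation of `(∑_{ij} q_{ij})²`. -/
noncomputable def Etot2 (n : ℕ) (pd : (Fin n → Fin n → ℕ) → ℝ≥0∞) : ℝ≥0∞ :=
  ∑' q : Fin n → Fin n → ℕ, pd q * (∑ i, ∑ j, (q i j : ℝ≥0∞)) ^ 2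

/-- Euclidean norm on `ℝ^{n×n}`. -/
noncomputable def normE (n : ℕ) (x : Fin n → Fin n → ℝ) : ℝ :=
  Real.sqrt (∑ i, ∑ j, x i j ^ 2)

/-- The cone `K = {x : x_{ij} = w_i + w̃_j, w, w̃ ≥ 0}`. -/
def coneK (n : ℕ) : Set (Fin n → Fin n → ℝ) :=
  {x | ∃ w wt : Fin n → ℝ, (∀ i, 0 ≤ w i) ∧ (∀ j, 0 ≤ wt j) ∧ ∀ i j, x i j = w i + wt j}

/-- Embedding of queue states into `ℝ^{n×n}`. -/
def toR (n : ℕ) (q : Fin n → Fin n → ℕ) : Fin n → Fin n → ℝ :=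
  fun i j => (q i j : ℝ)

/-- `proj` is the nearest-point projection onto the cone `K`. -/
def IsConeProj (n : ℕ) (proj : (Fin n → Fin n → ℝ) → (Fin n → Fin n → ℝ)) : Prop :=
  ∀ x, proj x ∈ coneK n ∧ ∀ y ∈ coneK n, normE n (x - proj x) ≤ normE n (x - y)

/-- Bernoulli distribution on `ℕ` with success probability `p`. -/
noncomputable def bern (p : ℝ) : ℕ → ℝ≥0∞ :=
  fun k => if k = 0 then ENNReal.ofReal (1 - p) else if k = 1 then ENNReal.ofReal p else 0

end SwitchModel

open SwitchModel

/-!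
Fix a row `i` and write `Q`, `R`, `P` for the `i`-th row sums of the current queues, of the
arrivals and of the next queues. A schedule serves at most one packet of row `i`, so
`Q + R ≤ P + 1`, hence `(Q + R)² + Q ≤ P² + P + 2Q + R`. Averaging over one step from the
stationary state, the `P`-terms have the same mean as the corresponding `Q`-terms (finite by
the second-moment hypothesis) and cancel; as the arrivals are independent of the state, what
remains is `2 E[Q] E[R] + E[R²] ≤ 2 E[Q] + E[R]`. For Bernoulli arrivals of rate
`p = (1 − ε)/n`, `E[R] = 1 − ε` and `E[R²] = E[R] + n(n − 1)p²`, so `E[Q] ≥ n(n − 1)p²/(2ε)`;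
summing over the `n` rows gives the bound.
-/

theorem Nat.sq_le_sq_add_self_add_of_le_add_one {x y : ℕ} (h : x ≤ y + 1) :
    x ^ 2 ≤ y ^ 2 + y + x := by
  nlinarith

theorem ENNReal.tsum_mul_natCast_le_tsum_mul_sq {α : Type*} (μ : α → ℝ≥0∞) (f : α → ℕ) :
    ∑' x, μ x * (f x : ℝ≥0∞) ≤ ∑' x, μ x * (f x : ℝ≥0∞) ^ 2 := by
  gcongr with x
  exact_mod_cast Nat.le_self_pow two_ne_zero (f x)

theorem ENNReal.le_two_mul_mul_of_add_le {B L e C : ℝ≥0∞} (hB : B ≠ ⊤) (hL : L ≠ ⊤)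
    (hLe : L + e = 1) (h : 2 * B * L + (L + C) ≤ 2 * B + L) : C ≤ 2 * B * e := by
  have h2BL : 2 * B * L ≠ ⊤ := by finiteness
  rw [← ENNReal.add_le_add_iff_left h2BL, ← ENNReal.add_le_add_iff_right hL]
  calc 2 * B * L + C + L = 2 * B * L + (L + C) := by ring
    _ ≤ 2 * B + L := h
    _ = 2 * B * L + 2 * B * e + L := by
      rw [mul_assoc, mul_assoc, ← mul_add, ← mul_add, hLe, mul_one]

namespace SwitchModel

open Finset

variable {n : ℕ}

def rowSum (q : Fin n → Fin n → ℕ) (i : Fin n) : ℕ := ∑ j, q i j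

theorem rowSum_le_rowSum_nextQ_add_one {s : Fin n → Fin n → ℕ} (hs : IsSchedule n s)
    (q a : Fin n → Fin n → ℕ) (i : Fin n) :
    rowSum q i + rowSum a i ≤ rowSum (nextQ n q a s) i + 1 := by
  have hle : ∑ j, (q i j + a i j) ≤ ∑ j, (nextQ n q a s i j + s i j) :=
    sum_le_sum fun j _ => le_tsub_add
  rw [sum_add_distrib, sum_add_distrib] at hle
  exact hle.trans (Nat.add_le_add_left (hs.2.1 i) _)

theorem Etot_eq_sum_rowSum (pd : (Fin n → Fin n → ℕ) → ℝ≥0∞) :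
    Etot n pd = ∑ i, ∑' q, pd q * (rowSum q i : ℝ≥0∞) := by
  simp_rw [Etot, rowSum, Nat.cast_sum, mul_sum]
  exact Summable.tsum_finsetSum fun _ _ => ENNReal.summable

theorem tsum_mul_rowSum_sq_le_Etot2 (pd : (Fin n → Fin n → ℕ) → ℝ≥0∞) (i : Fin n) :
    ∑' q, pd q * (rowSum q i : ℝ≥0∞) ^ 2 ≤ Etot2 n pd := by
  refine ENNReal.tsum_le_tsum fun q => mul_le_mul_right (pow_le_pow_left' ?_ 2) _
  rw [rowSum, Nat.cast_sum]
  exact single_le_sum (f := fun i => ∑ j, (q i j : ℝ≥0∞)) (fun _ _ => by simp) (mem_univ i)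

section Arrivals

variable {A : Fin n → Fin n → ℕ → ℝ≥0∞} {S : Finset ℕ}

theorem tsum_jointA_mul_prod (hS : ∀ i j k, k ∉ S → A i j k = 0)
    (Φ : Fin n → Fin n → ℕ → ℝ≥0∞) :
    ∑' a : Fin n → Fin n → ℕ, jointA n A a * ∏ i, ∏ j, Φ i j (a i j)
      = ∏ i, ∏ j, ∑ k ∈ S, A i j k * Φ i j k := by
  rw [tsum_eq_sum (s := Fintype.piFinset fun _ => Fintype.piFinset fun _ => S)]
  · simp only [jointA, ← prod_mul_distrib, prod_univ_sum]
  · intro a ha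
    simp only [Fintype.mem_piFinset, not_forall] at ha
    obtain ⟨i, j, hj⟩ := ha
    rw [jointA, prod_eq_zero (mem_univ i) (prod_eq_zero (mem_univ j) (hS i j _ hj)), zero_mul]

variable (hS : ∀ i j k, k ∉ S → A i j k = 0) (hA : ∀ i j, ∑ k ∈ S, A i j k = 1)
include hS hA

theorem tsum_jointA_mul_prod_row (i : Fin n) (Ψ : Fin n → ℕ → ℝ≥0∞) :
    ∑' a : Fin n → Fin n → ℕ, jointA n A a * ∏ j, Ψ j (a i j)
      = ∏ j, ∑ k ∈ S, A i j k * Ψ j k := by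
  have := tsum_jointA_mul_prod hS fun i₁ => if i₁ = i then Ψ else 1
  simpa [ite_apply, prod_ite_irrel, hA] using this

theorem tsum_jointA_mul_apply (i j : Fin n) (g : ℕ → ℝ≥0∞) :
    ∑' a : Fin n → Fin n → ℕ, jointA n A a * g (a i j) = ∑ k ∈ S, A i j k * g k := by
  have := tsum_jointA_mul_prod_row hS hA i fun j₁ k => if j₁ = j then g k else 1
  simpa [apply_ite, hA] using this

theorem tsum_jointA_mul_apply_mul_apply (i : Fin n) {j j' : Fin n} (hj : j ≠ j')
    (g g' : ℕ → ℝ≥0∞) :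
    ∑' a : Fin n → Fin n → ℕ, jointA n A a * (g (a i j) * g' (a i j'))
      = (∑ k ∈ S, A i j k * g k) * ∑ k ∈ S, A i j' k * g' k := by
  have := tsum_jointA_mul_prod_row hS hA i fun j₁ k =>
    if j₁ = j then g k else if j₁ = j' then g' k else 1
  have hpair (f f' : Fin n → ℝ≥0∞) :
      ∏ j₁, (if j₁ = j then f j₁ else if j₁ = j' then f' j₁ else 1) = f j * f' j' := by
    rw [prod_eq_mul_of_mem j j' (mem_univ _) (mem_univ _) hj (by simp +contextual)]
    simp [hj.symm]
  simpa only [hpair, mul_ite, mul_one, sum_ite_irrel, hA] using this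

end Arrivals

section Bernoulli

variable {p : ℝ}

theorem bern_eq_zero_of_notMem_range_two {k : ℕ} (hk : k ∉ range 2) : bern p k = 0 := by
  have : 1 < k := by simpa using hk
  simp [bern, show k ≠ 0 by omega, show k ≠ 1 by omega]

theorem sum_range_two_bern (hp0 : 0 ≤ p) (hp1 : p ≤ 1) : ∑ k ∈ range 2, bern p k = 1 := by
  simp [sum_range_succ, bern, ← ENNReal.ofReal_add (sub_nonneg.2 hp1) hp0]

theorem sum_range_two_bern_mul_cast : ∑ k ∈ range 2, bern p k * k = ENNReal.ofReal p := by
  simp [sum_range_succ, bern]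

variable (hp0 : 0 ≤ p) (hp1 : p ≤ 1)
include hp0 hp1

theorem tsum_jointA_bern :
    ∑' a : Fin n → Fin n → ℕ, jointA n (fun _ _ => bern p) a = 1 := by
  simpa [sum_range_two_bern hp0 hp1] using tsum_jointA_mul_prod (A := fun _ _ => bern p)
    (fun _ _ _ => bern_eq_zero_of_notMem_range_two) (fun _ _ _ => 1)

theorem tsum_jointA_bern_mul_apply (i j : Fin n) (g : ℕ → ℝ≥0∞) :
    ∑' a : Fin n → Fin n → ℕ, jointA n (fun _ _ => bern p) a * g (a i j)
      = ∑ k ∈ range 2, bern p k * g k :=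
  tsum_jointA_mul_apply (fun _ _ _ => bern_eq_zero_of_notMem_range_two)
    (fun _ _ => sum_range_two_bern hp0 hp1) i j g

theorem tsum_jointA_bern_mul_rowSum (i : Fin n) :
    ∑' a : Fin n → Fin n → ℕ, jointA n (fun _ _ => bern p) a * (rowSum a i : ℝ≥0∞)
      = n * ENNReal.ofReal p := by
  simp_rw [rowSum, Nat.cast_sum, mul_sum]
  rw [Summable.tsum_finsetSum fun _ _ => ENNReal.summable]
  simp [tsum_jointA_bern_mul_apply hp0 hp1 i _ (fun k => (k : ℝ≥0∞)), sum_range_two_bern_mul_cast]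

theorem tsum_jointA_bern_mul_rowSum_sq (i : Fin n) :
    ∑' a : Fin n → Fin n → ℕ, jointA n (fun _ _ => bern p) a * (rowSum a i : ℝ≥0∞) ^ 2
      = n * ENNReal.ofReal p + n * (n - 1 : ℕ) * ENNReal.ofReal p ^ 2 := by
  have hentry (j j' : Fin n) :
      ∑' a : Fin n → Fin n → ℕ, jointA n (fun _ _ => bern p) a * ((a i j : ℝ≥0∞) * a i j')
        = if j = j' then ENNReal.ofReal p else ENNReal.ofReal p ^ 2 := by
    split_ifs with h
    · subst h
      rw [tsum_jointA_bern_mul_apply hp0 hp1 i j (fun k => (k : ℝ≥0∞) * k)]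
      simp [sum_range_succ, bern]
    · rw [tsum_jointA_mul_apply_mul_apply (fun _ _ _ => bern_eq_zero_of_notMem_range_two)
        (fun _ _ => sum_range_two_bern hp0 hp1) i h, sum_range_two_bern_mul_cast, sq]
  simp_rw [rowSum, Nat.cast_sum, sq, sum_mul_sum, mul_sum]
  rw [Summable.tsum_finsetSum fun _ _ => ENNReal.summable]
  simp_rw [Summable.tsum_finsetSum fun _ _ => ENNReal.summable, hentry]
  simp [sum_ite, filter_eq, filter_ne, card_erase_of_mem, sq, mul_assoc]

end Bernoulli

section Transition

variable {A : Fin n → Fin n → ℕ → ℝ≥0∞}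
  {pol : (Fin n → Fin n → ℕ) → (Fin n → Fin n → ℕ) → ℝ≥0∞} {pd : (Fin n → Fin n → ℕ) → ℝ≥0∞}

variable (A pol pd) in
noncomputable def transitionMean
    (g : (Fin n → Fin n → ℕ) → (Fin n → Fin n → ℕ) → (Fin n → Fin n → ℕ) → ℝ≥0∞) : ℝ≥0∞ :=
  ∑' q, pd q * ∑' (a) (s), jointA n A a * pol q s * g q a s

theorem tsum_kernelPol_mul (q : Fin n → Fin n → ℕ) (f : (Fin n → Fin n → ℕ) → ℝ≥0∞) :
    ∑' q', kernelPol n A pol q q' * f q'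
      = ∑' (a) (s), jointA n A a * pol q s * f (nextQ n q a s) := by
  simp_rw [kernelPol, ← ENNReal.tsum_mul_right]
  rw [ENNReal.tsum_comm]
  refine tsum_congr fun a => ?_
  rw [ENNReal.tsum_comm]
  refine tsum_congr fun s => ?_
  simp [mul_ite, ite_mul]

theorem transitionMean_comp_nextQ (hpd : IsInvariant n (kernelPol n A pol) pd)
    (f : (Fin n → Fin n → ℕ) → ℝ≥0∞) :
    transitionMean A pol pd (fun q a s => f (nextQ n q a s)) = ∑' q, pd q * f q := by
  conv_rhs => rw [← tsum_congr fun q' => congrArg (· * f q') (hpd.2 q')]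
  simp_rw [transitionMean, ← tsum_kernelPol_mul, ← ENNReal.tsum_mul_left, ← ENNReal.tsum_mul_right,
    mul_assoc]
  exact ENNReal.tsum_comm

theorem transitionMean_add (g g' : (Fin n → Fin n → ℕ) → (Fin n → Fin n → ℕ) →
      (Fin n → Fin n → ℕ) → ℝ≥0∞) :
    transitionMean A pol pd (fun q a s => g q a s + g' q a s)
      = transitionMean A pol pd g + transitionMean A pol pd g' := by
  simp only [transitionMean, mul_add, ENNReal.tsum_add]

theorem transitionMean_mono (hpol : ∀ q s, pol q s ≠ 0 → IsSchedule n s)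
    {g g' : (Fin n → Fin n → ℕ) → (Fin n → Fin n → ℕ) → (Fin n → Fin n → ℕ) → ℝ≥0∞}
    (h : ∀ q a s, IsSchedule n s → g q a s ≤ g' q a s) :
    transitionMean A pol pd g ≤ transitionMean A pol pd g' := by
  refine ENNReal.tsum_le_tsum fun q => mul_le_mul_right
    (ENNReal.tsum_le_tsum fun a => ENNReal.tsum_le_tsum fun s => ?_) _
  by_cases hs : pol q s = 0
  · simp [hs]
  · exact mul_le_mul_right (h q a s (hpol q s hs)) _

theorem transitionMean_mul (hpol : ∀ q, ∑' s, pol q s = 1)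
    (f h : (Fin n → Fin n → ℕ) → ℝ≥0∞) :
    transitionMean A pol pd (fun q a _ => f q * h a)
      = (∑' q, pd q * f q) * ∑' a, jointA n A a * h a := by
  simp_rw [transitionMean, ENNReal.tsum_mul_right, ENNReal.tsum_mul_left, hpol, mul_one,
    mul_left_comm _ (f _), ENNReal.tsum_mul_left, ← mul_assoc]
  exact ENNReal.tsum_mul_right

theorem transitionMean_state (hpol : ∀ q, ∑' s, pol q s = 1) (hA : ∑' a, jointA n A a = 1)
    (f : (Fin n → Fin n → ℕ) → ℝ≥0∞) :
    transitionMean A pol pd (fun q _ _ => f q) = ∑' q, pd q * f q := by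
  simpa [hA] using transitionMean_mul (A := A) (pd := pd) hpol f 1

theorem transitionMean_arrival (hpol : ∀ q, ∑' s, pol q s = 1) (hpd : ∑' q, pd q = 1)
    (h : (Fin n → Fin n → ℕ) → ℝ≥0∞) :
    transitionMean A pol pd (fun _ a _ => h a) = ∑' a, jointA n A a * h a := by
  simpa [hpd] using transitionMean_mul (A := A) (pd := pd) hpol 1 h

theorem rowSum_drift (hpol1 : ∀ q, ∑' s, pol q s = 1)
    (hpol2 : ∀ q s, pol q s ≠ 0 → IsSchedule n s) (hpd : IsInvariant n (kernelPol n A pol) pd)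
    (hA : ∑' a, jointA n A a = 1) (i : Fin n)
    (hfin : ∑' q, pd q * (rowSum q i : ℝ≥0∞) ^ 2 ≠ ⊤) :
    2 * (∑' q, pd q * (rowSum q i : ℝ≥0∞)) * ∑' a, jointA n A a * (rowSum a i : ℝ≥0∞)
        + ∑' a, jointA n A a * (rowSum a i : ℝ≥0∞) ^ 2
      ≤ 2 * ∑' q, pd q * (rowSum q i : ℝ≥0∞) + ∑' a, jointA n A a * (rowSum a i : ℝ≥0∞) := by
  set D := ∑' q, pd q * ((rowSum q i : ℝ≥0∞) ^ 2 + rowSum q i)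
  have hD : D ≠ ⊤ := by
    refine ne_top_of_le_ne_top (ENNReal.add_ne_top.2 ⟨hfin, hfin⟩) ?_
    simp_rw [D, mul_add, ENNReal.tsum_add]
    exact add_le_add le_rfl (ENNReal.tsum_mul_natCast_le_tsum_mul_sq _ _)
  have h2B : ∑' q, pd q * (2 * (rowSum q i : ℝ≥0∞)) = 2 * ∑' q, pd q * (rowSum q i : ℝ≥0∞) := by
    simp_rw [mul_left_comm _ (2 : ℝ≥0∞), ENNReal.tsum_mul_left]
  have hpoint (q a s) (hs : IsSchedule n s) :
      ((rowSum q i : ℝ≥0∞) ^ 2 + rowSum q i) + (2 * rowSum q i * rowSum a i + (rowSum a i) ^ 2)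
        ≤ ((rowSum (nextQ n q a s) i : ℝ≥0∞) ^ 2 + rowSum (nextQ n q a s) i)
          + (2 * rowSum q i + rowSum a i) := by
    have hsq : ((rowSum q i + rowSum a i : ℕ) : ℝ≥0∞) ^ 2
        ≤ (rowSum (nextQ n q a s) i : ℝ≥0∞) ^ 2 + rowSum (nextQ n q a s) i
          + (rowSum q i + rowSum a i : ℕ) := by
      exact_mod_cast Nat.sq_le_sq_add_self_add_of_le_add_one
        (rowSum_le_rowSum_nextQ_add_one hs q a i)
    push_cast at hsq
    calc _ = ((rowSum q i : ℝ≥0∞) + rowSum a i) ^ 2 + rowSum q i := by ring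
      _ ≤ _ := add_le_add_left hsq _
      _ = _ := by ring
  have key := transitionMean_mono (A := A) (pd := pd) hpol2 hpoint
  rw [transitionMean_add, transitionMean_state hpol1 hA, transitionMean_add,
    transitionMean_mul hpol1, transitionMean_arrival hpol1 hpd.1, transitionMean_add,
    transitionMean_comp_nextQ hpd (fun q => (rowSum q i : ℝ≥0∞) ^ 2 + rowSum q i),
    transitionMean_add, transitionMean_state hpol1 hA, transitionMean_arrival hpol1 hpd.1,
    h2B] at key
  exact (ENNReal.add_le_add_iff_left hD).1 key

end Transition

theorem bern_rowSum_mean_lower_bound {p ε : ℝ} (hp0 : 0 ≤ p) (hp1 : p ≤ 1) (hε : 0 < ε)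
    (hnp : n * p = 1 - ε) {pol : (Fin n → Fin n → ℕ) → (Fin n → Fin n → ℕ) → ℝ≥0∞}
    (hpol1 : ∀ q, ∑' s, pol q s = 1) (hpol2 : ∀ q s, pol q s ≠ 0 → IsSchedule n s)
    {pd : (Fin n → Fin n → ℕ) → ℝ≥0∞} (hpd : IsInvariant n (kernelPol n (fun _ _ => bern p) pol) pd)
    (i : Fin n) (hfin : ∑' q, pd q * (rowSum q i : ℝ≥0∞) ^ 2 ≠ ⊤) :
    ENNReal.ofReal (n * (n - 1) * p ^ 2 / (2 * ε)) ≤ ∑' q, pd q * (rowSum q i : ℝ≥0∞) := by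
  have hdrift := rowSum_drift hpol1 hpol2 hpd (tsum_jointA_bern hp0 hp1) i hfin
  rw [tsum_jointA_bern_mul_rowSum_sq hp0 hp1, tsum_jointA_bern_mul_rowSum hp0 hp1] at hdrift
  have hL : (n : ℝ≥0∞) * ENNReal.ofReal p = ENNReal.ofReal (1 - ε) := by
    rw [← hnp, ENNReal.ofReal_mul (Nat.cast_nonneg n), ENNReal.ofReal_natCast]
  have hLe : (n : ℝ≥0∞) * ENNReal.ofReal p + ENNReal.ofReal ε = 1 := by
    rw [hL, ← ENNReal.ofReal_add (hnp ▸ by positivity) hε.le]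
    simp
  have hB := ne_top_of_le_ne_top hfin (ENNReal.tsum_mul_natCast_le_tsum_mul_sq pd (rowSum · i))
  have hC := ENNReal.le_two_mul_mul_of_add_le hB (by finiteness) hLe hdrift
  rw [ENNReal.ofReal_div_of_pos (by linarith)]
  refine ENNReal.div_le_of_le_mul' ?_
  convert hC using 1
  · rw [← Nat.cast_pred i.pos, ENNReal.ofReal_mul (by positivity),
      ENNReal.ofReal_mul (by positivity), ENNReal.ofReal_natCast, ENNReal.ofReal_natCast, ENNReal.ofReal_pow hp0]
  · rw [ENNReal.ofReal_mul zero_le_two, ENNReal.ofReal_ofNat]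
    ring

end SwitchModel

/-- Theorem 6.1, lower-bound part: universal lower bound for uniform
Bernoulli traffic with rate `(1−ε)/n`, under an arbitrary scheduling policy. -/
theorem universal_lower_bound_bernoulli
    (n : ℕ) (hn : 1 ≤ n) (ε : ℝ) (hε0 : 0 < ε) (hε1 : ε < 1)
    (pol : (Fin n → Fin n → ℕ) → (Fin n → Fin n → ℕ) → ℝ≥0∞)
    (hpol1 : ∀ q, (∑' s : Fin n → Fin n → ℕ, pol q s) = 1)
    (hpol2 : ∀ q s, pol q s ≠ 0 → IsSchedule n s)
    (pd : (Fin n → Fin n → ℕ) → ℝ≥0∞)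
    (hpd : IsInvariant n (kernelPol n (fun _ _ => bern ((1 - ε) / n)) pol) pd)
    (hfin : Etot2 n pd ≠ ⊤) :
    ENNReal.ofReal ((1 - ε) ^ 2 * (n - 1) / (2 * ε)) ≤ Etot n pd := by
  have hnR : (1 : ℝ) ≤ n := by exact_mod_cast hn
  have hp0 : 0 ≤ (1 - ε) / n := div_nonneg (by linarith) (by linarith)
  have hp1 : (1 - ε) / n ≤ 1 := div_le_one_of_le₀ (by linarith) (by linarith)
  have hnp : n * ((1 - ε) / n) = 1 - ε := mul_div_cancel₀ _ (by positivity)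
  have hrow (i : Fin n) := bern_rowSum_mean_lower_bound hp0 hp1 hε0 hnp hpol1 hpol2 hpd i
    (ne_top_of_le_ne_top hfin (tsum_mul_rowSum_sq_le_Etot2 pd i))
  calc ENNReal.ofReal ((1 - ε) ^ 2 * (n - 1) / (2 * ε))
      = ∑ _i : Fin n, ENNReal.ofReal (n * (n - 1) * ((1 - ε) / n) ^ 2 / (2 * ε)) := by
        rw [Finset.sum_const, Finset.card_univ, Fintype.card_fin, nsmul_eq_mul,
          ← ENNReal.ofReal_natCast, ← ENNReal.ofReal_mul (by positivity)]
        congr 1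
        field_simp
    _ ≤ Etot n pd := by
        rw [Etot_eq_sum_rowSum]
        exact Finset.sum_le_sum fun i _ => hrow i
end

section
/- Finiteness of steady-state quadratic moments under MaxWeight (Lemma 5.1). Fix n ≥ 1 and suppose the arrival mean matrix λ lies in the interior of the capacity region C, i.e., there exists ε₁ > 0 such that the matrix with entries λ_{ij} + ε₁ has all row sums and column sums at most 1. Let π be an invariant distribution of the MaxWeight Markov chain. Then E_π[(∑_{ij} q̄_{ij})²] < ∞; in particular E_π[∑_{ij} q̄_{ij}²], E_π[∑_i (∑_j q̄_{ij})²] and E_π[∑_j (∑_i q̄_{ij})²] are all finite. -/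
/-!
Take `V(q) = ∑ q_{ij}²` and the Lyapunov function `V²`. Since `λ + ε₁` lies below a doubly
stochastic matrix, Birkhoff's theorem makes the MaxWeight schedule at least as heavy as it, so
`E[V(q⁺)] ≤ V(q) - 2ε₁‖q‖₁ + n²a_max²`, while `|V(q⁺) - V(q)|` grows only linearly in `‖q‖₁`.
Expanding `V(q⁺)² = (V(q) + (V(q⁺) - V(q)))²` and using `‖q‖₁² ≤ n² V(q)` gives
`E[V(q⁺)²] - V(q)² ≤ -(4ε₁/n²)‖q‖₁³ + O(‖q‖₁²) ≤ -‖q‖₁² + C`.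
Summing such a drift inequality against an invariant distribution bounds `E_π ‖q‖₁²` by `C`;
the other three moments are dominated by `‖q‖₁²`.
-/

open scoped BigOperators ENNReal

open SwitchModel

open Finset

section ProductDistribution

variable {R ι κ : Type*} [CommSemiring R] [Fintype ι] [DecidableEq ι] {t : Finset κ}
  {f : ι → κ → R}

theorem sum_piFinset_prod_eq_one (hf : ∀ i, ∑ k ∈ t, f i k = 1) :
    ∑ x ∈ Fintype.piFinset (fun _ => t), ∏ i, f i (x i) = 1 := by
  rw [← prod_univ_sum]
  exact prod_eq_one fun i _ => hf i

theorem sum_piFinset_prod_mul_apply (hf : ∀ i, ∑ k ∈ t, f i k = 1) (i₀ : ι) (φ : κ → R) :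
    ∑ x ∈ Fintype.piFinset (fun _ => t), (∏ i, f i (x i)) * φ (x i₀)
      = ∑ k ∈ t, f i₀ k * φ k := by
  have hmarg (i : ι) : ∑ k ∈ t, f i k * (if i = i₀ then φ k else 1)
      = if i = i₀ then ∑ k ∈ t, f i₀ k * φ k else 1 := by
    split_ifs with hi
    · rw [hi]
    · simp [hf]
  have h := prod_univ_sum (fun _ => t) fun i k => f i k * if i = i₀ then φ k else 1
  simp only [hmarg, prod_ite_eq', mem_univ, if_true, prod_mul_distrib] at h
  exact h.symm

end ProductDistribution

theorem exists_mem_doublyStochastic_le {𝕜 ι : Type*} [Field 𝕜] [LinearOrder 𝕜]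
    [IsStrictOrderedRing 𝕜] [Fintype ι] [DecidableEq ι] {x : Matrix ι ι 𝕜}
    (h0 : ∀ i j, 0 ≤ x i j) (hrow : ∀ i, ∑ j, x i j ≤ 1) (hcol : ∀ j, ∑ i, x i j ≤ 1) :
    ∃ y ∈ doublyStochastic 𝕜 ι, ∀ i j, x i j ≤ y i j := by
  set r : ι → 𝕜 := fun i => 1 - ∑ j, x i j
  set c : ι → 𝕜 := fun j => 1 - ∑ i, x i j
  set D : 𝕜 := ∑ i, r i
  have hr : ∀ i, 0 ≤ r i := fun i => sub_nonneg.2 (hrow i)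
  have hc : ∀ j, 0 ≤ c j := fun j => sub_nonneg.2 (hcol j)
  have hcD : ∑ j, c j = D := by simp only [c, D, r, sum_sub_distrib]; rw [sum_comm]
  -- The row deficits `r` and column deficits `c` have the same total `D`,
  -- so adding `r cᵀ / D` fills both.
  have hfill : 0 ≤ D ∧ (∀ i, ∑ j, r i * c j / D = r i) ∧ ∀ j, ∑ i, r i * c j / D = c j := by
    refine ⟨sum_nonneg fun i _ => hr i, fun i => ?_, fun j => ?_⟩ <;>
      rcases eq_or_ne D 0 with hD | hD
    · simp [(sum_eq_zero_iff_of_nonneg fun i _ => hr i).1 hD i (mem_univ i)]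
    · rw [← sum_div, ← mul_sum, hcD, mul_div_cancel_right₀ _ hD]
    · simp [(sum_eq_zero_iff_of_nonneg fun j _ => hc j).1 (hcD.trans hD) j (mem_univ j)]
    · rw [← sum_div, ← sum_mul, mul_div_cancel_left₀ _ hD]
  obtain ⟨hD, hrow', hcol'⟩ := hfill
  have hfill_nonneg (i j : ι) : 0 ≤ r i * c j / D := div_nonneg (mul_nonneg (hr i) (hc j)) hD
  refine ⟨x + Matrix.of fun i j => r i * c j / D, mem_doublyStochastic_iff_sum.2 ⟨?_, ?_, ?_⟩,
    fun i j => le_add_of_nonneg_right (hfill_nonneg i j)⟩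
  · exact fun i j => add_nonneg (h0 i j) (hfill_nonneg i j)
  · intro i
    simp only [Matrix.add_apply, Matrix.of_apply, sum_add_distrib, hrow', r]
    ring
  · intro j
    simp only [Matrix.add_apply, Matrix.of_apply, sum_add_distrib, hcol', c]
    ring

section Stationary

variable {X : Type*} {P : X → X → ℝ≥0∞} {π : X → ℝ≥0∞} (hπ : ∀ y, ∑' x, π x * P x y = π y)
include hπ

theorem tsum_mul_tsum_mul_of_invariant (h : X → ℝ≥0∞) :
    ∑' x, π x * ∑' y, P x y * h y = ∑' y, π y * h y := by
  simp_rw [← ENNReal.tsum_mul_left, ← mul_assoc]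
  rw [ENNReal.tsum_comm]
  simp_rw [ENNReal.tsum_mul_right, hπ]

variable (hπ1 : ∑' x, π x = 1) (hP : ∀ x, ∑' y, P x y = 1) {f g : X → ℝ≥0∞} {b : ℝ≥0∞}
  (hdrift : ∀ x, ∑' y, P x y * f y + g x ≤ f x + b)
include hπ1 hP hdrift

theorem tsum_mul_ite_le_of_drift {M : ℝ≥0∞} (hM : M ≠ ⊤) :
    ∑' x, π x * (if f x ≤ M then g x else 0) ≤ b := by
  -- `∑' x, π x * f x` may be infinite; the drift of `min f M` can be cancelled instead.
  set fM : X → ℝ≥0∞ := fun x => min (f x) M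
  have hdriftM (x : X) : ∑' y, P x y * fM y + (if f x ≤ M then g x else 0) ≤ fM x + b := by
    by_cases hx : f x ≤ M
    · rw [if_pos hx, show fM x = f x from min_eq_left hx]
      refine le_trans ?_ (hdrift x)
      gcongr with y
      exact min_le_left _ _
    · rw [if_neg hx, add_zero, show fM x = M from min_eq_right (le_of_not_ge hx)]
      calc ∑' y, P x y * fM y ≤ ∑' y, P x y * M :=
            ENNReal.tsum_le_tsum fun y => by gcongr; exact min_le_right _ _
        _ = M := by rw [ENNReal.tsum_mul_right, hP, one_mul]
        _ ≤ M + b := le_self_add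
  have hfM : ∑' x, π x * fM x ≠ ⊤ := by
    refine ne_top_of_le_ne_top (b := ∑' x, π x * M) ?_ ?_
    · rwa [ENNReal.tsum_mul_right, hπ1, one_mul]
    · exact ENNReal.tsum_le_tsum fun x => by gcongr; exact min_le_right _ _
  refine (ENNReal.add_le_add_iff_left hfM).1 ?_
  calc ∑' x, π x * fM x + ∑' x, π x * (if f x ≤ M then g x else 0)
      = ∑' x, π x * (∑' y, P x y * fM y + if f x ≤ M then g x else 0) := by
        rw [← tsum_mul_tsum_mul_of_invariant hπ, ← ENNReal.tsum_add]
        simp_rw [mul_add]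
    _ ≤ ∑' x, π x * (fM x + b) := ENNReal.tsum_le_tsum fun x => mul_le_mul_right (hdriftM x) _
    _ = ∑' x, π x * fM x + b := by
        simp_rw [mul_add]
        rw [ENNReal.tsum_add, ENNReal.tsum_mul_right, hπ1, one_mul]

theorem tsum_mul_le_of_drift (hf : ∀ x, f x ≠ ⊤) : ∑' x, π x * g x ≤ b := by
  refine ENNReal.tsum_eq_iSup_sum ▸ iSup_le fun s => ?_
  have hM : ∑ x ∈ s, f x ≠ ⊤ := ENNReal.sum_ne_top.2 fun x _ => hf x
  calc ∑ x ∈ s, π x * g x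
      = ∑ x ∈ s, π x * (if f x ≤ ∑ x ∈ s, f x then g x else 0) :=
        sum_congr rfl fun x hx => by rw [if_pos (single_le_sum (fun _ _ => zero_le) hx)]
    _ ≤ ∑' x, π x * (if f x ≤ ∑ x ∈ s, f x then g x else 0) := ENNReal.sum_le_tsum s
    _ ≤ b := tsum_mul_ite_le_of_drift hπ hπ1 hP hdrift hM

end Stationary

theorem mul_sq_le_mul_pow_three_add {α β t : ℝ} (hα : 0 < α) (hβ : 0 ≤ β) (ht : 0 ≤ t) :
    β * t ^ 2 ≤ α * t ^ 3 + β ^ 3 / α ^ 2 := by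
  rcases le_total (α * t) β with h | h
  · have htβ : t ≤ β / α := (le_div_iff₀' hα).2 h
    calc β * t ^ 2 ≤ β * (β / α) ^ 2 := by gcongr
      _ = β ^ 3 / α ^ 2 := by ring
      _ ≤ α * t ^ 3 + β ^ 3 / α ^ 2 := le_add_of_nonneg_left (by positivity)
  · calc β * t ^ 2 ≤ α * t * t ^ 2 := by gcongr
      _ = α * t ^ 3 := by ring
      _ ≤ α * t ^ 3 + β ^ 3 / α ^ 2 := le_add_of_nonneg_right (by positivity)

namespace SwitchModel

theorem isPerm_permMatrix {n : ℕ} (σ : Equiv.Perm (Fin n)) : IsPerm n (σ.permMatrix ℕ) := by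
  obtain ⟨-, hrow, hcol⟩ := mem_doublyStochastic_iff_sum.1
    (permMatrix_mem_doublyStochastic (σ := σ) (R := ℕ))
  exact ⟨fun i j => le_one_of_mem_doublyStochastic permMatrix_mem_doublyStochastic, hrow, hcol⟩

theorem IsMaxWeight.sum_mul_le {n : ℕ} {sched : (Fin n → Fin n → ℕ) → Fin n → Fin n → ℕ}
    (hsched : IsMaxWeight n sched) (q : Fin n → Fin n → ℕ) {x : Fin n → Fin n → ℝ}
    (h0 : ∀ i j, 0 ≤ x i j) (hrow : ∀ i, ∑ j, x i j ≤ 1) (hcol : ∀ j, ∑ i, x i j ≤ 1) :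
    ∑ i, ∑ j, (q i j : ℝ) * x i j ≤ ∑ i, ∑ j, (q i j : ℝ) * sched q i j := by
  obtain ⟨y, hy, hxy⟩ := exists_mem_doublyStochastic_le (x := Matrix.of x) h0 hrow hcol
  let L : Matrix (Fin n) (Fin n) ℝ →ₗ[ℝ] ℝ :=
    ∑ i, ∑ j, (q i j : ℝ) • Matrix.entryLinearMap ℝ ℝ i j
  have hL (y : Matrix (Fin n) (Fin n) ℝ) : L y = ∑ i, ∑ j, (q i j : ℝ) * y i j := by
    simp [L, LinearMap.sum_apply]
  rw [← SetLike.mem_coe, doublyStochastic_eq_convexHull_permMatrix] at hy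
  obtain ⟨_, ⟨σ, rfl⟩, hσ⟩ :=
    (L.convexOn convex_univ).exists_ge_of_mem_convexHull (Set.subset_univ _) hy
  calc ∑ i, ∑ j, (q i j : ℝ) * x i j ≤ L y := by
        rw [hL]
        gcongr with i _ j _
        exact hxy i j
    _ ≤ L (σ.permMatrix ℝ) := hσ
    _ = ((∑ i, ∑ j, q i j * σ.permMatrix ℕ i j : ℕ) : ℝ) := by
        simp [hL, Equiv.Perm.permMatrix, PEquiv.toMatrix_apply]
    _ ≤ ∑ i, ∑ j, (q i j : ℝ) * sched q i j := by
        exact_mod_cast (hsched q).2 _ (isPerm_permMatrix σ)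

variable {n amax : ℕ}

def arrivalSupport (n amax : ℕ) : Finset (Fin n → Fin n → ℕ) :=
  Fintype.piFinset fun _ => Fintype.piFinset fun _ => range (amax + 1)

theorem mem_arrivalSupport {a : Fin n → Fin n → ℕ} :
    a ∈ arrivalSupport n amax ↔ ∀ i j, a i j ≤ amax := by
  simp [arrivalSupport]

noncomputable def arrivalWeight (n : ℕ) (A : Fin n → Fin n → ℕ → ℝ≥0∞)
    (a : Fin n → Fin n → ℕ) : ℝ :=
  ∏ i, ∏ j, (A i j (a i j)).toReal

theorem arrivalWeight_nonneg (A : Fin n → Fin n → ℕ → ℝ≥0∞) (a : Fin n → Fin n → ℕ) :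
    0 ≤ arrivalWeight n A a :=
  prod_nonneg fun _ _ => prod_nonneg fun _ _ => ENNReal.toReal_nonneg

namespace ArrivalDist

variable {A : Fin n → Fin n → ℕ → ℝ≥0∞} {lam sig : Fin n → Fin n → ℝ}
  {sched : (Fin n → Fin n → ℕ) → Fin n → Fin n → ℕ} (hA : ArrivalDist n A lam sig amax)
include hA

theorem ne_top (i j : Fin n) (k : ℕ) : A i j k ≠ ⊤ :=
  ne_top_of_le_ne_top (hA.1 i j ▸ ENNReal.one_ne_top) (ENNReal.le_tsum k)

theorem eq_zero_of_notMem_range {i j : Fin n} {k : ℕ} (hk : k ∉ range (amax + 1)) :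
    A i j k = 0 := by
  by_contra h
  exact hk (mem_range_succ_iff.2 (hA.2.1 i j k h))

theorem sum_eq_one (i j : Fin n) : ∑ k ∈ range (amax + 1), A i j k = 1 := by
  rw [← hA.1 i j, tsum_eq_sum fun k hk => hA.eq_zero_of_notMem_range hk]

theorem sum_toReal_eq_one (i j : Fin n) : ∑ k ∈ range (amax + 1), (A i j k).toReal = 1 := by
  rw [← ENNReal.toReal_sum fun k _ => hA.ne_top i j k, hA.sum_eq_one, ENNReal.toReal_one]

theorem sum_toReal_mul_eq_mean (i j : Fin n) :
    ∑ k ∈ range (amax + 1), (A i j k).toReal * k = lam i j := by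
  rw [← hA.2.2.1 i j, tsum_eq_sum fun k hk => by simp [hA.eq_zero_of_notMem_range hk]]

theorem mean_nonneg (i j : Fin n) : 0 ≤ lam i j :=
  hA.sum_toReal_mul_eq_mean i j ▸ sum_nonneg fun _ _ => by positivity

theorem sum_arrivalWeight : ∑ a ∈ arrivalSupport n amax, arrivalWeight n A a = 1 :=
  sum_piFinset_prod_eq_one fun i => sum_piFinset_prod_eq_one (hA.sum_toReal_eq_one i)

theorem sum_arrivalWeight_mul_apply (φ : ℕ → ℝ) (i j : Fin n) :
    ∑ a ∈ arrivalSupport n amax, arrivalWeight n A a * φ (a i j)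
      = ∑ k ∈ range (amax + 1), (A i j k).toReal * φ k := by
  have hrow (i : Fin n) : ∑ r ∈ Fintype.piFinset (fun _ => range (amax + 1)),
      ∏ j, (A i j (r j)).toReal = 1 :=
    sum_piFinset_prod_eq_one (hA.sum_toReal_eq_one i)
  unfold arrivalSupport arrivalWeight
  rw [sum_piFinset_prod_mul_apply hrow i fun r => φ (r j),
    sum_piFinset_prod_mul_apply (hA.sum_toReal_eq_one i) j φ]

theorem sum_arrivalWeight_mul_eq_mean (i j : Fin n) :
    ∑ a ∈ arrivalSupport n amax, arrivalWeight n A a * a i j = lam i j := by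
  rw [hA.sum_arrivalWeight_mul_apply (fun k => (k : ℝ)), hA.sum_toReal_mul_eq_mean]

theorem jointA_eq_ofReal (a : Fin n → Fin n → ℕ) :
    jointA n A a = ENNReal.ofReal (arrivalWeight n A a) := by
  simp only [jointA, arrivalWeight, ← ENNReal.toReal_prod]
  rw [ENNReal.ofReal_toReal (ENNReal.prod_ne_top fun i _ => ENNReal.prod_ne_top fun j _ =>
    hA.ne_top i j _)]

theorem jointA_eq_zero {a : Fin n → Fin n → ℕ} (ha : a ∉ arrivalSupport n amax) :
    jointA n A a = 0 := by
  obtain ⟨i, j, hij⟩ : ∃ i j, amax < a i j := by simpa [mem_arrivalSupport] using ha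
  exact prod_eq_zero (mem_univ i) <| prod_eq_zero (mem_univ j) <|
    hA.eq_zero_of_notMem_range (by simpa using hij)

theorem tsum_kernelMW_mul (q : Fin n → Fin n → ℕ) (h : (Fin n → Fin n → ℕ) → ℝ≥0∞) :
    ∑' q', kernelMW n A sched q q' * h q'
      = ∑ a ∈ arrivalSupport n amax, jointA n A a * h (nextQ n q a (sched q)) := by
  calc ∑' q', kernelMW n A sched q q' * h q'
      = ∑' a, ∑' q', jointA n A a * (if nextQ n q a (sched q) = q' then 1 else 0) * h q' := by
        simp only [kernelMW, ← ENNReal.tsum_mul_right]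
        exact ENNReal.tsum_comm
    _ = ∑' a, jointA n A a * h (nextQ n q a (sched q)) := by
        refine tsum_congr fun a => ?_
        rw [tsum_eq_single (nextQ n q a (sched q)) fun q' hq' => by simp [Ne.symm hq']]
        simp
    _ = _ := tsum_eq_sum fun a ha => by rw [hA.jointA_eq_zero ha, zero_mul]

theorem tsum_kernelMW_mul_ofReal (q : Fin n → Fin n → ℕ) {h : (Fin n → Fin n → ℕ) → ℝ}
    (h0 : ∀ q, 0 ≤ h q) :
    ∑' q', kernelMW n A sched q q' * ENNReal.ofReal (h q')
      = ENNReal.ofReal (∑ a ∈ arrivalSupport n amax,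
          arrivalWeight n A a * h (nextQ n q a (sched q))) := by
  rw [hA.tsum_kernelMW_mul, ENNReal.ofReal_sum_of_nonneg fun a _ =>
    mul_nonneg (arrivalWeight_nonneg A a) (h0 _)]
  refine sum_congr rfl fun a _ => ?_
  rw [hA.jointA_eq_ofReal, ENNReal.ofReal_mul (arrivalWeight_nonneg A a)]

theorem tsum_kernelMW (q : Fin n → Fin n → ℕ) : ∑' q', kernelMW n A sched q q' = 1 := by
  simpa [hA.sum_arrivalWeight] using
    hA.tsum_kernelMW_mul_ofReal (sched := sched) q (h := fun _ => 1) fun _ => zero_le_one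

end ArrivalDist

theorem natCast_add_sub_sq_le {x a s : ℕ} (ha : a ≤ amax) (hs : s ≤ 1) (hamax : 1 ≤ amax) :
    ((x + a - s : ℕ) : ℝ) ^ 2 ≤ (x : ℝ) ^ 2 + 2 * x * ((a : ℝ) - s) + (amax : ℝ) ^ 2 := by
  rcases le_or_gt s (x + a) with h | h
  · have ha' : (a : ℝ) ≤ amax := by exact_mod_cast ha
    have hs' : (s : ℝ) ≤ 1 := by exact_mod_cast hs
    have h1 : (1 : ℝ) ≤ amax := by exact_mod_cast hamax
    rw [Nat.cast_sub h, Nat.cast_add]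
    nlinarith [Nat.cast_nonneg (α := ℝ) a, Nat.cast_nonneg (α := ℝ) s]
  · obtain ⟨rfl, rfl⟩ : x = 0 ∧ a = 0 := by omega
    simp [Nat.sub_eq_zero_of_le h.le]

theorem abs_natCast_add_sub_sq_sub_sq_le {x a s : ℕ} (ha : a ≤ amax) (hs : s ≤ 1)
    (hamax : 1 ≤ amax) :
    |((x + a - s : ℕ) : ℝ) ^ 2 - (x : ℝ) ^ 2| ≤ amax * (2 * x + amax) := by
  have hup : ((x + a - s : ℕ) : ℝ) ≤ x + amax := by
    exact_mod_cast (by omega : x + a - s ≤ x + amax)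
  have hdown : (x : ℝ) ≤ (x + a - s : ℕ) + amax := by
    exact_mod_cast (by omega : x ≤ x + a - s + amax)
  have h0 := Nat.cast_nonneg (α := ℝ) (x + a - s)
  have h0' := Nat.cast_nonneg (α := ℝ) x
  rw [abs_le]
  constructor <;> nlinarith

noncomputable def totalQueue (n : ℕ) (q : Fin n → Fin n → ℕ) : ℝ := ∑ i, ∑ j, (q i j : ℝ)

noncomputable def sqNorm (n : ℕ) (q : Fin n → Fin n → ℕ) : ℝ := ∑ i, ∑ j, (q i j : ℝ) ^ 2

theorem totalQueue_nonneg (q : Fin n → Fin n → ℕ) : 0 ≤ totalQueue n q := by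
  unfold totalQueue; positivity

theorem sqNorm_nonneg (q : Fin n → Fin n → ℕ) : 0 ≤ sqNorm n q := by
  unfold sqNorm; positivity

theorem sqNorm_le_totalQueue_sq (q : Fin n → Fin n → ℕ) : sqNorm n q ≤ totalQueue n q ^ 2 :=
  calc sqNorm n q ≤ ∑ i, (∑ j, (q i j : ℝ)) ^ 2 :=
        sum_le_sum fun i _ => sum_sq_le_sq_sum_of_nonneg fun _ _ => Nat.cast_nonneg _
    _ ≤ totalQueue n q ^ 2 := sum_sq_le_sq_sum_of_nonneg fun _ _ => by positivity

theorem totalQueue_sq_le (q : Fin n → Fin n → ℕ) : totalQueue n q ^ 2 ≤ n ^ 2 * sqNorm n q :=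
  calc totalQueue n q ^ 2 ≤ n * ∑ i, (∑ j, (q i j : ℝ)) ^ 2 := by
        simpa [totalQueue] using
          sq_sum_le_card_mul_sum_sq (s := univ) (f := fun i => ∑ j, (q i j : ℝ))
    _ ≤ n * ∑ i, n * ∑ j, (q i j : ℝ) ^ 2 := by
        gcongr with i
        simpa using sq_sum_le_card_mul_sum_sq (s := univ) (f := fun j => (q i j : ℝ))
    _ = n ^ 2 * sqNorm n q := by rw [sqNorm, ← mul_sum]; ring

theorem sum_sum_natCast_sq_eq_ofReal (q : Fin n → Fin n → ℕ) :
    (∑ i, ∑ j, (q i j : ℝ≥0∞)) ^ 2 = ENNReal.ofReal (totalQueue n q ^ 2) := by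
  have h := ENNReal.ofReal_natCast ((∑ i, ∑ j, q i j) ^ 2)
  push_cast at h
  exact h.symm

section NextState

variable {q a s : Fin n → Fin n → ℕ} (ha : ∀ i j, a i j ≤ amax) (hs : ∀ i j, s i j ≤ 1)
  (hamax : 1 ≤ amax)
include ha hs hamax

theorem sqNorm_nextQ_le :
    sqNorm n (nextQ n q a s) ≤ sqNorm n q
      + 2 * (∑ i, ∑ j, (q i j : ℝ) * a i j - ∑ i, ∑ j, (q i j : ℝ) * s i j)
      + n ^ 2 * amax ^ 2 :=
  calc sqNorm n (nextQ n q a s)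
      ≤ ∑ i, ∑ j, ((q i j : ℝ) ^ 2 + 2 * q i j * ((a i j : ℝ) - s i j) + (amax : ℝ) ^ 2) :=
        sum_le_sum fun i _ => sum_le_sum fun j _ => natCast_add_sub_sq_le (ha i j) (hs i j) hamax
    _ = _ := by
        simp only [sqNorm, sum_add_distrib, sum_const, card_univ, Fintype.card_fin, nsmul_eq_mul,
          mul_sub, sum_sub_distrib, mul_sum]
        ring_nf

theorem abs_sqNorm_nextQ_sub_le :
    |sqNorm n (nextQ n q a s) - sqNorm n q| ≤ 2 * amax * totalQueue n q + n ^ 2 * amax ^ 2 :=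
  calc |sqNorm n (nextQ n q a s) - sqNorm n q|
      ≤ ∑ i, ∑ j, |((nextQ n q a s i j : ℕ) : ℝ) ^ 2 - (q i j : ℝ) ^ 2| := by
        simp only [sqNorm, ← sum_sub_distrib]
        exact (abs_sum_le_sum_abs _ _).trans (sum_le_sum fun i _ => abs_sum_le_sum_abs _ _)
    _ ≤ ∑ i, ∑ j, (amax : ℝ) * (2 * q i j + amax) :=
        sum_le_sum fun i _ => sum_le_sum fun j _ =>
          abs_natCast_add_sub_sq_sub_sq_le (ha i j) (hs i j) hamax
    _ = _ := by
        simp only [totalQueue, mul_add, sum_add_distrib, sum_const, card_univ, Fintype.card_fin,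
          nsmul_eq_mul, mul_sum]
        ring_nf

end NextState

section Drift

variable {A : Fin n → Fin n → ℕ → ℝ≥0∞} {lam sig : Fin n → Fin n → ℝ}
  {sched : (Fin n → Fin n → ℕ) → Fin n → Fin n → ℕ} {ε₁ : ℝ}
  (hA : ArrivalDist n A lam sig amax) (hsched : IsMaxWeight n sched)
  (hintr : ∀ i, ∑ j, (lam i j + ε₁) ≤ 1) (hintc : ∀ j, ∑ i, (lam i j + ε₁) ≤ 1)
  (hamax : 1 ≤ amax)
include hA hsched hintr hintc hamax

theorem sum_arrivalWeight_mul_sqNorm_nextQ_le (hε₁ : 0 ≤ ε₁) (q : Fin n → Fin n → ℕ) :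
    ∑ a ∈ arrivalSupport n amax, arrivalWeight n A a * sqNorm n (nextQ n q a (sched q))
      ≤ sqNorm n q - 2 * ε₁ * totalQueue n q + n ^ 2 * amax ^ 2 := by
  set S := arrivalSupport n amax
  set w := arrivalWeight n A
  set qa : (Fin n → Fin n → ℕ) → ℝ := fun a => ∑ i, ∑ j, (q i j : ℝ) * a i j
  have hw : ∑ a ∈ S, w a = 1 := hA.sum_arrivalWeight
  have hmw : ∑ i, ∑ j, (q i j : ℝ) * lam i j + ε₁ * totalQueue n q ≤ qa (sched q) := by
    have h := hsched.sum_mul_le q (x := fun i j => lam i j + ε₁)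
      (fun i j => add_nonneg (hA.mean_nonneg i j) hε₁) hintr hintc
    simpa only [mul_add, sum_add_distrib, totalQueue, sum_mul, mul_comm ε₁, qa] using h
  have hmean : ∑ a ∈ S, w a * qa a = ∑ i, ∑ j, (q i j : ℝ) * lam i j := by
    simp only [qa, mul_sum, ← hA.sum_arrivalWeight_mul_eq_mean]
    rw [sum_comm]
    refine sum_congr rfl fun i _ => ?_
    rw [sum_comm]
    exact sum_congr rfl fun j _ => sum_congr rfl fun a _ => by ring
  calc ∑ a ∈ S, w a * sqNorm n (nextQ n q a (sched q))
      ≤ ∑ a ∈ S, w a * (sqNorm n q + 2 * (qa a - qa (sched q)) + n ^ 2 * amax ^ 2) :=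
        sum_le_sum fun a ha => mul_le_mul_of_nonneg_left
          (sqNorm_nextQ_le (mem_arrivalSupport.1 ha) (hsched q).1.1 hamax)
          (arrivalWeight_nonneg A a)
    _ = sqNorm n q + 2 * (∑ a ∈ S, w a * qa a - qa (sched q)) + n ^ 2 * amax ^ 2 := by
        simp only [mul_add, mul_sub, sum_add_distrib, sum_sub_distrib, mul_left_comm _ (2 : ℝ),
          ← mul_sum, ← sum_mul, hw]
        ring
    _ ≤ sqNorm n q - 2 * ε₁ * totalQueue n q + n ^ 2 * amax ^ 2 := by linarith

theorem sum_arrivalWeight_mul_sqNorm_nextQ_sq_le (hε₁ : 0 ≤ ε₁) (q : Fin n → Fin n → ℕ) :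
    ∑ a ∈ arrivalSupport n amax, arrivalWeight n A a * sqNorm n (nextQ n q a (sched q)) ^ 2
      ≤ sqNorm n q ^ 2 + 2 * sqNorm n q * (n ^ 2 * amax ^ 2 - 2 * ε₁ * totalQueue n q)
        + (2 * amax * totalQueue n q + n ^ 2 * amax ^ 2) ^ 2 := by
  set S := arrivalSupport n amax
  set w := arrivalWeight n A
  set V := sqNorm n q
  set D := 2 * amax * totalQueue n q + n ^ 2 * amax ^ 2
  set V' := fun a => sqNorm n (nextQ n q a (sched q))
  have hw : ∑ a ∈ S, w a = 1 := hA.sum_arrivalWeight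
  have hjump (a) (ha : a ∈ S) : (V' a - V) ^ 2 ≤ D ^ 2 := by
    have h := abs_sqNorm_nextQ_sub_le (q := q) (mem_arrivalSupport.1 ha) (hsched q).1.1 hamax
    exact sq_le_sq' (abs_le.1 h).1 (abs_le.1 h).2
  calc ∑ a ∈ S, w a * V' a ^ 2
      = ∑ a ∈ S, w a * (V' a - V) ^ 2 + 2 * V * ∑ a ∈ S, w a * V' a - V ^ 2 := by
        rw [← mul_one (V ^ 2), ← hw, mul_sum, mul_sum, ← sum_add_distrib, ← sum_sub_distrib]
        exact sum_congr rfl fun a _ => by ring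
    _ ≤ ∑ a ∈ S, w a * D ^ 2
          + 2 * V * (V - 2 * ε₁ * totalQueue n q + n ^ 2 * amax ^ 2) - V ^ 2 := by
        gcongr ?_ + 2 * V * ?_ - _
        · exact sum_le_sum fun a ha =>
            mul_le_mul_of_nonneg_left (hjump a ha) (arrivalWeight_nonneg A a)
        · exact mul_nonneg zero_le_two (sqNorm_nonneg q)
        · exact sum_arrivalWeight_mul_sqNorm_nextQ_le hA hsched hintr hintc hamax hε₁ q
    _ = _ := by rw [← sum_mul, hw]; ring

theorem exists_sqNorm_sq_drift (hε₁ : 0 < ε₁) (hn : 1 ≤ n) :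
    ∃ C, ∀ q, ∑ a ∈ arrivalSupport n amax,
        arrivalWeight n A a * sqNorm n (nextQ n q a (sched q)) ^ 2 + totalQueue n q ^ 2
      ≤ sqNorm n q ^ 2 + C := by
  set B : ℝ := n ^ 2 * amax ^ 2
  set α : ℝ := 4 * ε₁ / n ^ 2
  set β : ℝ := 2 * B + 8 * amax ^ 2 + 1
  refine ⟨β ^ 3 / α ^ 2 + 2 * B ^ 2, fun q => ?_⟩
  set V := sqNorm n q
  set T := totalQueue n q
  have hT := totalQueue_nonneg q
  have hsecond :=
    sum_arrivalWeight_mul_sqNorm_nextQ_sq_le hA hsched hintr hintc hamax hε₁.le q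
  have hn0 : (0 : ℝ) < n := by exact_mod_cast hn
  have hα : 0 < α := by positivity
  have hαT : α * T ^ 3 ≤ 4 * ε₁ * V * T :=
    calc α * T ^ 3 = α * T * T ^ 2 := by ring
      _ ≤ α * T * (n ^ 2 * V) := by gcongr; exact totalQueue_sq_le q
      _ = 4 * ε₁ * V * T := by simp only [α]; field_simp
  have hVB : V * B ≤ T ^ 2 * B := by gcongr; exact sqNorm_le_totalQueue_sq q
  have hcubic := mul_sq_le_mul_pow_three_add hα (by positivity : 0 ≤ β) hT
  nlinarith [sq_nonneg (2 * amax * T - B)]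

theorem exists_kernelMW_drift (hε₁ : 0 < ε₁) (hn : 1 ≤ n) :
    ∃ C : ℝ, ∀ q, ∑' q', kernelMW n A sched q q' * ENNReal.ofReal (sqNorm n q' ^ 2)
        + (∑ i, ∑ j, (q i j : ℝ≥0∞)) ^ 2
      ≤ ENNReal.ofReal (sqNorm n q ^ 2) + ENNReal.ofReal C := by
  obtain ⟨C, hdrift⟩ := exists_sqNorm_sq_drift hA hsched hintr hintc hamax hε₁ hn
  refine ⟨C, fun q => ?_⟩
  rw [hA.tsum_kernelMW_mul_ofReal q fun _ => by positivity, sum_sum_natCast_sq_eq_ofReal,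
    ← ENNReal.ofReal_add (sum_nonneg fun a _ => mul_nonneg (arrivalWeight_nonneg A a)
      (by positivity)) (by positivity)]
  exact (ENNReal.ofReal_le_ofReal (hdrift q)).trans ENNReal.ofReal_add_le

end Drift

end SwitchModel

/-- Lemma 5.1: finiteness of steady-state quadratic moments under
MaxWeight when the arrival rate matrix lies in the interior of the capacity region. -/
theorem steady_state_quadratic_moments_finite
    (n : ℕ) (hn : 1 ≤ n)
    (lam sig : Fin n → Fin n → ℝ) (amax : ℕ) (hamax : 1 ≤ amax)
    (A : Fin n → Fin n → ℕ → ℝ≥0∞)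
    (hA : ArrivalDist n A lam sig amax)
    (ε₁ : ℝ) (hε₁ : 0 < ε₁)
    (hintr : ∀ i, (∑ j, (lam i j + ε₁)) ≤ 1)
    (hintc : ∀ j, (∑ i, (lam i j + ε₁)) ≤ 1)
    (sched : (Fin n → Fin n → ℕ) → (Fin n → Fin n → ℕ))
    (hsched : IsMaxWeight n sched)
    (pd : (Fin n → Fin n → ℕ) → ℝ≥0∞)
    (hpd : IsInvariant n (kernelMW n A sched) pd) :
    Etot2 n pd ≠ ⊤ ∧
    (∑' q : Fin n → Fin n → ℕ, pd q * (∑ i, ∑ j, ((q i j : ℝ≥0∞)) ^ 2)) ≠ ⊤ ∧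
    (∑' q : Fin n → Fin n → ℕ, pd q * (∑ i, (∑ j, (q i j : ℝ≥0∞)) ^ 2)) ≠ ⊤ ∧
    (∑' q : Fin n → Fin n → ℕ, pd q * (∑ j, (∑ i, (q i j : ℝ≥0∞)) ^ 2)) ≠ ⊤ := by
  obtain ⟨C, hdrift⟩ := exists_kernelMW_drift hA hsched hintr hintc hamax hε₁ hn
  have hEtot2 : Etot2 n pd ≤ ENNReal.ofReal C :=
    tsum_mul_le_of_drift hpd.2 hpd.1 hA.tsum_kernelMW hdrift fun _ => ENNReal.ofReal_ne_top
  have hdominated (h : (Fin n → Fin n → ℕ) → ℝ≥0∞)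
      (hle : ∀ q, h q ≤ (∑ i, ∑ j, (q i j : ℝ≥0∞)) ^ 2) : ∑' q, pd q * h q ≠ ⊤ :=
    ne_top_of_le_ne_top (ne_top_of_le_ne_top ENNReal.ofReal_ne_top hEtot2)
      (ENNReal.tsum_le_tsum fun q => mul_le_mul_right (hle q) _)
  refine ⟨hdominated _ fun _ => le_rfl, hdominated _ fun q => ?_, hdominated _ fun q => ?_,
    hdominated _ fun q => ?_⟩
  · exact (sum_le_sum fun i _ => sum_sq_le_sq_sum_of_nonneg fun _ _ => zero_le).trans
      (sum_sq_le_sq_sum_of_nonneg fun _ _ => zero_le)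
  · exact sum_sq_le_sq_sum_of_nonneg fun _ _ => zero_le
  · rw [sum_comm (f := fun i j => (q i j : ℝ≥0∞))]
    exact sum_sq_le_sq_sum_of_nonneg fun _ _ => zero_le
end
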